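/- There is a constant c₁ (not depending on e^{Q_n} and n) such that: if V_n ∈ L_n(m,M) with m = (2(1+e^{Q_n}))^{−1} and M = q²/2, and n is sufficiently large, then max_{i,j} |(V_n^{−1})_{ij} − (S_n)_{ij}| ≤ c₁(1+e^{Q_n})³/(n−1)², where (S_n)_{ij} = δ_{ij}/v_{ii}. -/

import Mathlib

/-!
Write `V = D + A` with `D` the diagonal part. For any inverse `W` of `V` the ring identity
`W - D⁻¹ = D⁻¹ (A W A - A) D⁻¹` holds, and every `v_ii` is at least `(n - 1) m`.
The row-sum condition makes `V` a signless Laplacian,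
`2 xᵀ V x = Σ_{i ≠ j} v_ij (x_i + x_j)²`, which is at least `2 m (n - 2) ‖x‖²`. So `V` is positive definite and
`|uᵀ W w| ≤ ‖u‖ ‖w‖ / (m (n - 2))`; for the `i`-th row and `j`-th column of `A`, whose
norms are at most `√n M`, this bounds the numerator of the identity by `M + n M² / (m (n - 2))`.
With `m = (2(1 + e^Q))⁻¹` the error is `O((1 + e^Q)³ / (n - 1)²)`.
-/

open Finset Matrix

/-- The matrix class `L_n(m, M)`: symmetric nonnegative matrices whose diagonal entries equal
the corresponding off-diagonal row sums, with all off-diagonal entries in `[m, M]`. -/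
def MatrixClassL (n : ℕ) (m M : ℝ) (V : Matrix (Fin n) (Fin n) ℝ) : Prop :=
  V.IsSymm ∧ (∀ i, V i i = ∑ j ∈ Finset.univ.erase i, V i j) ∧
    ∀ i j, i ≠ j → m ≤ V i j ∧ V i j ≤ M

theorem sub_eq_mul_sub_mul_of_mul_eq_one {R : Type*} [Ring R] {v w d e : R}
    (hvw : v * w = 1) (hwv : w * v = 1) (hde : d * e = 1) (hed : e * d = 1) :
    w - e = e * ((v - d) * w * (v - d) - (v - d)) * e := by
  have key : (v - d) * w * (v - d) - (v - d) = d * w * d - d := by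
    simp only [sub_mul, mul_sub, hvw, one_mul, mul_assoc, hwv, mul_one]
    abel
  rw [key]
  simp only [mul_sub, sub_mul, ← mul_assoc, hed, one_mul]
  simp only [mul_assoc, hde, mul_one]

theorem abs_sub_diagonal_diag_apply_le {ι : Type*} [DecidableEq ι] {V : Matrix ι ι ℝ} {m M : ℝ}
    (hm : 0 ≤ m) (hM : 0 ≤ M)
    (hoff : ∀ i j, i ≠ j → m ≤ V i j ∧ V i j ≤ M) (i j : ι) :
    |(V - diagonal V.diag) i j| ≤ M := by
  by_cases h : i = j
  · simp [h, hM]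
  · rw [Matrix.sub_apply, diagonal_apply_ne _ h, sub_zero,
      abs_of_nonneg (hm.trans (hoff i j h).1)]
    exact (hoff i j h).2

section

variable {ι : Type*} [Fintype ι]

theorem sum_sq_le_card_mul_sq {v : ι → ℝ} {M : ℝ} (hv : ∀ l, |v l| ≤ M) :
    ∑ l, v l ^ 2 ≤ Fintype.card ι * M ^ 2 := by
  have hsq : ∀ l ∈ univ, v l ^ 2 ≤ M ^ 2 := fun l _ => by
    rw [← sq_abs]; exact pow_le_pow_left₀ (abs_nonneg _) (hv l) 2
  simpa only [card_univ, nsmul_eq_mul] using sum_le_card_nsmul univ _ _ hsq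

theorem sq_mul_sum_sq_le_sum_sq_mulVec {V : Matrix ι ι ℝ} {c : ℝ} (hc : 0 ≤ c)
    (hV : ∀ x : ι → ℝ, c * ∑ i, x i ^ 2 ≤ x ⬝ᵥ V *ᵥ x) (x : ι → ℝ) :
    c ^ 2 * ∑ i, x i ^ 2 ≤ ∑ i, (V *ᵥ x) i ^ 2 := by
  have hcs : (x ⬝ᵥ V *ᵥ x) ^ 2 ≤ (∑ i, x i ^ 2) * ∑ i, (V *ᵥ x) i ^ 2 :=
    sum_mul_sq_le_sq_mul_sq univ x (V *ᵥ x)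
  have hsq : (c * ∑ i, x i ^ 2) ^ 2 ≤ (x ⬝ᵥ V *ᵥ x) ^ 2 :=
    pow_le_pow_left₀ (by positivity) (hV x) 2
  rcases (sum_nonneg fun i _ => sq_nonneg (x i)).eq_or_lt with hx0 | hxpos
  · rw [← hx0, mul_zero]; exact sum_nonneg fun i _ => sq_nonneg _
  · nlinarith

theorem posDef_of_mul_sum_sq_le {V : Matrix ι ι ℝ} {c : ℝ} (hc : 0 < c) (hsym : V.IsSymm)
    (hV : ∀ x : ι → ℝ, c * ∑ i, x i ^ 2 ≤ x ⬝ᵥ V *ᵥ x) : V.PosDef := by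
  refine posDef_iff_dotProduct_mulVec.mpr ⟨hsym, fun x hx => ?_⟩
  obtain ⟨i, hi⟩ : ∃ i, x i ≠ 0 := Function.ne_iff.mp hx
  have hpos : 0 < ∑ i, x i ^ 2 :=
    sum_pos' (fun j _ => sq_nonneg (x j)) ⟨i, mem_univ i, by positivity⟩
  rw [star_trivial]
  exact (mul_pos hc hpos).trans_le (hV x)

variable [DecidableEq ι]

theorem sq_mul_sq_dotProduct_mulVec_le {V W : Matrix ι ι ℝ} {c : ℝ} (hc : 0 ≤ c)
    (hV : ∀ x : ι → ℝ, c * ∑ i, x i ^ 2 ≤ x ⬝ᵥ V *ᵥ x) (hVW : V * W = 1)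
    (u w : ι → ℝ) :
    c ^ 2 * (u ⬝ᵥ W *ᵥ w) ^ 2 ≤ (∑ i, u i ^ 2) * ∑ i, w i ^ 2 := by
  have hW : c ^ 2 * ∑ i, (W *ᵥ w) i ^ 2 ≤ ∑ i, w i ^ 2 := by
    simpa only [mulVec_mulVec, hVW, one_mulVec] using
      sq_mul_sum_sq_le_sum_sq_mulVec hc hV (W *ᵥ w)
  calc c ^ 2 * (u ⬝ᵥ W *ᵥ w) ^ 2 ≤ c ^ 2 * ((∑ i, u i ^ 2) * ∑ i, (W *ᵥ w) i ^ 2) :=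
        mul_le_mul_of_nonneg_left (sum_mul_sq_le_sq_mul_sq univ u (W *ᵥ w)) (by positivity)
    _ = (∑ i, u i ^ 2) * (c ^ 2 * ∑ i, (W *ᵥ w) i ^ 2) := by ring
    _ ≤ (∑ i, u i ^ 2) * ∑ i, w i ^ 2 :=
        mul_le_mul_of_nonneg_left hW (sum_nonneg fun i _ => sq_nonneg _)

theorem inv_apply_sub_ite_eq {K : Type*} [Field K] {V : Matrix ι ι K} (hV : IsUnit V.det) (hdiag : ∀ i, V i i ≠ 0)
    (i j : ι) :
    V⁻¹ i j - (if i = j then (V i i)⁻¹ else 0) =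
      (((V - diagonal V.diag) * V⁻¹ * (V - diagonal V.diag)) i j - (V - diagonal V.diag) i j) /
        (V i i * V j j) := by
  have hDE : diagonal V.diag * diagonal (fun i => (V i i)⁻¹) = 1 := by
    rw [diagonal_mul_diagonal, ← diagonal_one]; congr 1; ext k; exact mul_inv_cancel₀ (hdiag k)
  have hED : diagonal (fun i => (V i i)⁻¹) * diagonal V.diag = 1 := by
    rw [diagonal_mul_diagonal, ← diagonal_one]; congr 1; ext k; exact inv_mul_cancel₀ (hdiag k)
  have h : (V⁻¹ - diagonal (fun i => (V i i)⁻¹)) i j = _ := congrFun (congrFun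
    (sub_eq_mul_sub_mul_of_mul_eq_one (R := Matrix ι ι K) (mul_nonsing_inv V hV)
      (nonsing_inv_mul V hV) hDE hED) i) j
  rw [Matrix.sub_apply, diagonal_apply, mul_diagonal, diagonal_mul, Matrix.sub_apply] at h
  rw [h]
  field_simp [hdiag i, hdiag j]

theorem two_mul_dotProduct_mulVec_eq_sum_erase {V : Matrix ι ι ℝ} (hsym : V.IsSymm)
    (hdiag : ∀ i, V i i = ∑ j ∈ univ.erase i, V i j) (x : ι → ℝ) :
    2 * (x ⬝ᵥ V *ᵥ x) = ∑ i, ∑ j ∈ univ.erase i, V i j * (x i + x j) ^ 2 := by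
  have hrow : ∀ i, ∑ j, V i j = 2 * V i i := fun i => by
    rw [← add_sum_erase _ _ (mem_univ i), ← hdiag]; ring
  have hcol : ∀ j, ∑ i, V i j = 2 * V j j := fun j => by
    rw [← hrow j]; exact sum_congr rfl fun i _ => hsym.apply j i
  have hexpand : ∑ i, ∑ j, V i j * (x i + x j) ^ 2 =
      ∑ i, (∑ j, V i j) * x i ^ 2 + 2 * (x ⬝ᵥ V *ᵥ x) +
        ∑ j, (∑ i, V i j) * x j ^ 2 := by
    simp only [dotProduct, mulVec, mul_sum, sum_mul]
    rw [sum_comm (f := fun j i => V i j * x j ^ 2), ← sum_add_distrib, ← sum_add_distrib]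
    refine sum_congr rfl fun i _ => ?_
    rw [← sum_add_distrib, ← sum_add_distrib]
    exact sum_congr rfl fun j _ => by ring
  have hdiagsum : ∑ i, V i i * (x i + x i) ^ 2 =
      ∑ i, 2 * V i i * x i ^ 2 + ∑ j, 2 * V j j * x j ^ 2 := by
    rw [← sum_add_distrib]; exact sum_congr rfl fun i _ => by ring
  simp only [sum_erase_eq_sub (mem_univ _), sum_sub_distrib, hexpand, hrow, hcol, hdiagsum]
  ring

theorem sum_sum_erase_add_sq (x : ι → ℝ) :
    ∑ i, ∑ j ∈ univ.erase i, (x i + x j) ^ 2 =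
      2 * (Fintype.card ι - 2) * ∑ i, x i ^ 2 + 2 * (∑ i, x i) ^ 2 := by
  have hexpand : ∀ i, ∑ j, (x i + x j) ^ 2 =
      Fintype.card ι * x i ^ 2 + 2 * x i * ∑ j, x j + ∑ j, x j ^ 2 := fun i => by
    simp only [add_sq, sum_add_distrib, sum_const, card_univ, nsmul_eq_mul, mul_sum]
  simp only [sum_erase_eq_sub (mem_univ _), sum_sub_distrib, hexpand, sum_add_distrib, ← two_mul,
    mul_pow, sum_const, card_univ, nsmul_eq_mul, ← mul_sum, ← sum_mul]
  ring

theorem mul_card_sub_two_mul_le_dotProduct_mulVec {V : Matrix ι ι ℝ} {m : ℝ} (hm : 0 ≤ m)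
    (hsym : V.IsSymm) (hdiag : ∀ i, V i i = ∑ j ∈ univ.erase i, V i j)
    (hlow : ∀ i j, i ≠ j → m ≤ V i j) (x : ι → ℝ) :
    m * (Fintype.card ι - 2) * ∑ i, x i ^ 2 ≤ x ⬝ᵥ V *ᵥ x := by
  have hweights : m * ∑ i, ∑ j ∈ univ.erase i, (x i + x j) ^ 2 ≤
      ∑ i, ∑ j ∈ univ.erase i, V i j * (x i + x j) ^ 2 := by
    simp only [mul_sum]
    exact sum_le_sum fun i _ => sum_le_sum fun j hj =>
      mul_le_mul_of_nonneg_right (hlow i j (ne_of_mem_erase hj).symm) (sq_nonneg _)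
  rw [sum_sum_erase_add_sq, ← two_mul_dotProduct_mulVec_eq_sum_erase hsym hdiag] at hweights
  nlinarith [mul_nonneg hm (sq_nonneg (∑ i, x i))]

theorem isUnit_det_of_offDiag_ge {V : Matrix ι ι ℝ} {m : ℝ} (hm : 0 < m)
    (hcard : 3 ≤ Fintype.card ι) (hsym : V.IsSymm)
    (hdiag : ∀ i, V i i = ∑ j ∈ univ.erase i, V i j)
    (hlow : ∀ i j, i ≠ j → m ≤ V i j) : IsUnit V.det := by
  have hn : (3 : ℝ) ≤ Fintype.card ι := by exact_mod_cast hcard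
  have hc : 0 < m * (Fintype.card ι - 2) := mul_pos hm (by linarith)
  exact (isUnit_iff_isUnit_det V).mp (posDef_of_mul_sum_sq_le hc hsym
    (mul_card_sub_two_mul_le_dotProduct_mulVec hm.le hsym hdiag hlow)).isUnit

theorem card_sub_one_mul_le_diag {V : Matrix ι ι ℝ} {m : ℝ}
    (hdiag : ∀ i, V i i = ∑ j ∈ univ.erase i, V i j)
    (hlow : ∀ i j, i ≠ j → m ≤ V i j) (k : ι) :
    (Fintype.card ι - 1) * m ≤ V k k := by
  have hcard_erase : (#(univ.erase k) : ℝ) = Fintype.card ι - 1 := by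
    rw [card_erase_of_mem (mem_univ k), card_univ,
      Nat.cast_sub (Fintype.card_pos_iff.mpr ⟨k⟩), Nat.cast_one]
  rw [hdiag k, ← hcard_erase, ← nsmul_eq_mul]
  exact card_nsmul_le_sum _ _ _ fun l hl => hlow k l (ne_of_mem_erase hl).symm

theorem abs_dotProduct_mulVec_le {V W : Matrix ι ι ℝ} {c M : ℝ} (hc : 0 < c)
    (hV : ∀ x : ι → ℝ, c * ∑ i, x i ^ 2 ≤ x ⬝ᵥ V *ᵥ x) (hVW : V * W = 1)
    {u w : ι → ℝ} (hu : ∀ l, |u l| ≤ M) (hw : ∀ l, |w l| ≤ M) :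
    |u ⬝ᵥ W *ᵥ w| ≤ Fintype.card ι * M ^ 2 / c := by
  rw [le_div_iff₀ hc, ← abs_of_pos hc, ← abs_mul]
  refine abs_le_of_sq_le_sq ?_ (by positivity)
  calc (u ⬝ᵥ W *ᵥ w * c) ^ 2 = c ^ 2 * (u ⬝ᵥ W *ᵥ w) ^ 2 := by ring
    _ ≤ (∑ l, u l ^ 2) * ∑ l, w l ^ 2 := sq_mul_sq_dotProduct_mulVec_le hc.le hV hVW u w
    _ ≤ (Fintype.card ι * M ^ 2) * (Fintype.card ι * M ^ 2) :=
      mul_le_mul (sum_sq_le_card_mul_sq hu) (sum_sq_le_card_mul_sq hw)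
        (sum_nonneg fun l _ => sq_nonneg _) (by positivity)
    _ = (Fintype.card ι * M ^ 2) ^ 2 := by ring

theorem abs_inv_apply_sub_ite_le {V : Matrix ι ι ℝ} {m M : ℝ} (hm : 0 < m)
    (hcard : 3 ≤ Fintype.card ι) (hsym : V.IsSymm)
    (hdiag : ∀ i, V i i = ∑ j ∈ univ.erase i, V i j)
    (hoff : ∀ i j, i ≠ j → m ≤ V i j ∧ V i j ≤ M) (i j : ι) :
    |V⁻¹ i j - (if i = j then (V i i)⁻¹ else 0)| ≤
      (M + Fintype.card ι * M ^ 2 / (m * (Fintype.card ι - 2))) /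
        ((Fintype.card ι - 1) * m) ^ 2 := by
  have hn : (3 : ℝ) ≤ Fintype.card ι := by exact_mod_cast hcard
  obtain ⟨a, b, hab⟩ := Fintype.exists_pair_of_one_lt_card (by omega : 1 < Fintype.card ι)
  have hM : 0 ≤ M := hm.le.trans ((hoff a b hab).1.trans (hoff a b hab).2)
  have hlow : ∀ i j, i ≠ j → m ≤ V i j := fun i j h => (hoff i j h).1
  have hV := isUnit_det_of_offDiag_ge hm hcard hsym hdiag hlow
  have hdiag_ge := card_sub_one_mul_le_diag hdiag hlow
  have hdiag_ge_pos : 0 < (Fintype.card ι - 1) * m := mul_pos (by linarith) hm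
  have hdiag_pos : ∀ k, 0 < V k k := fun k => hdiag_ge_pos.trans_le (hdiag_ge k)
  set A := V - diagonal V.diag
  have hA := abs_sub_diagonal_diag_apply_le hm.le hM hoff
  have hcross :
      |A i ⬝ᵥ V⁻¹ *ᵥ Aᵀ j| ≤ Fintype.card ι * M ^ 2 / (m * (Fintype.card ι - 2)) :=
    abs_dotProduct_mulVec_le (mul_pos hm (by linarith))
      (mul_card_sub_two_mul_le_dotProduct_mulVec hm.le hsym hdiag hlow) (mul_nonsing_inv V hV)
      (hA i) fun l => hA l j
  rw [inv_apply_sub_ite_eq hV fun k => (hdiag_pos k).ne', mul_mul_apply, abs_div,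
    abs_of_pos (mul_pos (hdiag_pos i) (hdiag_pos j))]
  have hnum : |A i ⬝ᵥ V⁻¹ *ᵥ Aᵀ j - A i j| ≤
      M + Fintype.card ι * M ^ 2 / (m * (Fintype.card ι - 2)) := by
    linarith [abs_sub (A i ⬝ᵥ V⁻¹ *ᵥ Aᵀ j) (A i j), hA i j]
  have hden : ((Fintype.card ι - 1) * m) ^ 2 ≤ V i i * V j j := by
    rw [sq]; exact mul_le_mul (hdiag_ge i) (hdiag_ge j) hdiag_ge_pos.le (hdiag_pos i).le
  exact div_le_div₀ ((abs_nonneg _).trans hnum) hnum (pow_pos hdiag_ge_pos 2) hden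

end

theorem error_bound_le_mul_pow_three_div_sq {n P M : ℝ} (hn : 3 ≤ n) (hP : 1 ≤ P)
    (hM : 1 ≤ M) :
    (M + n * M ^ 2 / ((2 * P)⁻¹ * (n - 2))) / ((n - 1) * (2 * P)⁻¹) ^ 2 ≤
      28 * M ^ 2 * P ^ 3 / (n - 1) ^ 2 := by
  have hcross : n * M ^ 2 / ((2 * P)⁻¹ * (n - 2)) ≤ 6 * P * M ^ 2 := by
    rw [div_le_iff₀ (mul_pos (by positivity) (by linarith))]
    field_simp
    nlinarith
  have hden : ((n - 1) * (2 * P)⁻¹) ^ 2 = (n - 1) ^ 2 / (4 * P ^ 2) := by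
    field_simp; ring
  calc (M + n * M ^ 2 / ((2 * P)⁻¹ * (n - 2))) / ((n - 1) * (2 * P)⁻¹) ^ 2
      ≤ (M + 6 * P * M ^ 2) / ((n - 1) * (2 * P)⁻¹) ^ 2 := by gcongr
    _ = (M + 6 * P * M ^ 2) * (4 * P ^ 2) / (n - 1) ^ 2 := by rw [hden]; field_simp
    _ ≤ 7 * P * M ^ 2 * (4 * P ^ 2) / (n - 1) ^ 2 := by
        gcongr
        nlinarith
    _ = 28 * M ^ 2 * P ^ 3 / (n - 1) ^ 2 := by ring

/-- There is a constant `c₁` (independent of `e^{Q_n}` and `n`) such that for all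
sufficiently large `n`, every `V ∈ L_n((2(1+e^{Q_n}))⁻¹, q²/2)` is invertible and
`max_{i,j} |(V⁻¹)_{ij} - (S_n)_{ij}| ≤ c₁ (1+e^{Q_n})³/(n-1)²`, where `(S_n)_{ij} = δ_{ij}/v_{ii}`. -/
theorem inverse_approximation_S (q : ℕ) (hq : 2 ≤ q) :
    ∃ c₁ : ℝ, 0 < c₁ ∧ ∃ N : ℕ, ∀ n : ℕ, N ≤ n →
      ∀ Q : ℝ, 0 < Q →
      ∀ V : Matrix (Fin n) (Fin n) ℝ,
        MatrixClassL n (2 * (1 + Real.exp Q))⁻¹ ((q : ℝ) ^ 2 / 2) V →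
        IsUnit V.det ∧
        ∀ i j : Fin n,
          |V⁻¹ i j - (if i = j then (V i i)⁻¹ else 0)|
            ≤ c₁ * (1 + Real.exp Q) ^ 3 / ((n : ℝ) - 1) ^ 2 := by
  have hM : (1 : ℝ) ≤ (q : ℝ) ^ 2 / 2 := by
    have : (2 : ℝ) ≤ q := by exact_mod_cast hq
    nlinarith
  refine ⟨28 * ((q : ℝ) ^ 2 / 2) ^ 2, by positivity, 3,
    fun n hn Q _ V ⟨hsym, hdiag, hoff⟩ => ?_⟩
  have hcard : 3 ≤ Fintype.card (Fin n) := by rwa [Fintype.card_fin]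
  have hm : 0 < (2 * (1 + Real.exp Q))⁻¹ := by positivity
  refine ⟨isUnit_det_of_offDiag_ge hm hcard hsym hdiag fun i j h => (hoff i j h).1,
    fun i j => (abs_inv_apply_sub_ite_le hm hcard hsym hdiag hoff i j).trans ?_⟩
  simpa only [Fintype.card_fin] using
    error_bound_le_mul_pow_three_div_sq (by exact_mod_cast hn) (by linarith [Real.exp_pos Q]) hM
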